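/- Let n ≥ 2, let G ⊂ ℝⁿ be a standard body, let d > 0, y ∈ ℝⁿ, and let A > 0 be a constant for which the Poincaré inequality ∫_{G_d(y)} |u − ū|² dx ≤ A d² ∫_{G_d(y)} |∇u|² dx holds for all Lipschitz functions u on Ḡ_d(y), where ū := |G_d|⁻¹ ∫_{G_d(y)} u dx. Then for every Lipschitz function u ≥ 0 on Ḡ_d(y) normalized by |G_d|⁻¹ ∫_{G_d(y)} u² dx = 1, the function φ := 1 − u satisfies ∫_{G_d(y)} φ² dx ≤ 4 A d² ∫_{G_d(y)} |∇φ|² dx. -/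

import Mathlib

open MeasureTheory Metric Set Filter
open scoped ENNReal Topology NNReal

noncomputable section

abbrev Euc (n : ℕ) := EuclideanSpace ℝ (Fin n)

/-- A standard body: bounded open set of diameter 1, star-shaped with respect to
every point of a ball `B_ρ(0) ⊆ G`. -/
def IsStandardBody {n : ℕ} (G : Set (Euc n)) (ρ : ℝ) : Prop :=
  IsOpen G ∧ Bornology.IsBounded G ∧ Metric.diam G = 1 ∧ 0 < ρ ∧
    Metric.ball (0 : Euc n) ρ ⊆ G ∧
    ∀ c ∈ Metric.ball (0 : Euc n) ρ, StarConvex ℝ c G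

/-- `G_d(y) = y + d • G`. -/
def bodyAt {n : ℕ} (G : Set (Euc n)) (d : ℝ) (y : Euc n) : Set (Euc n) :=
  (fun x => y + d • x) '' G

/-- Wiener capacity of a set `F ⊆ ℝⁿ`. -/
def wienerCap {n : ℕ} (F : Set (Euc n)) : ℝ :=
  sInf { I | ∃ u : Euc n → ℝ, (∃ c : NNReal, LipschitzWith c u) ∧ HasCompactSupport u ∧
    (∀ x ∈ F, u x = 1) ∧ I = ∫ x, ‖fderiv ℝ u x‖ ^ 2 }

/-- The negligibility class `N_γ(G_d(y), Ω)`. -/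
def Negligible {n : ℕ} (G : Set (Euc n)) (d : ℝ) (y : Euc n) (Ω : Set (Euc n)) (γ : ℝ)
    (F : Set (Euc n)) : Prop :=
  IsCompact F ∧ closure (bodyAt G d y) \ Ω ⊆ F ∧ F ⊆ closure (bodyAt G d y) ∧
    wienerCap F ≤ γ * wienerCap (closure (bodyAt G d y))

/-- `V_γ(G_d(y), Ω) = inf { V(Ḡ_d(y) \ F) : F ∈ N_γ(G_d(y),Ω) }` (`= ∞` if the class is empty). -/
def Vgamma {n : ℕ} (V : Measure (Euc n)) (G : Set (Euc n)) (d : ℝ) (y : Euc n)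
    (Ω : Set (Euc n)) (γ : ℝ) : ℝ≥0∞ :=
  ⨅ (F : Set (Euc n)) (_ : Negligible G d y Ω γ F), V (closure (bodyAt G d y) \ F)

/-- `u ∈ C_c^∞(Ω)`. -/
def IsTestFun {n : ℕ} (Ω : Set (Euc n)) (u : Euc n → ℝ) : Prop :=
  ContDiff ℝ (⊤ : ℕ∞) u ∧ HasCompactSupport u ∧ tsupport u ⊆ Ω

/-- The small-tails property characterizing discreteness of the spectrum of `-Δ + V` on `L²(Ω)`. -/
def SmallTails {n : ℕ} (Ω : Set (Euc n)) (V : Measure (Euc n)) : Prop :=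
  ∀ η > 0, ∃ R > 0, ∀ u : Euc n → ℝ, IsTestFun Ω u →
    ENNReal.ofReal (∫ x in Ω \ Metric.ball 0 R, u x ^ 2) ≤
      ENNReal.ofReal η *
        (ENNReal.ofReal (∫ x in Ω, ‖fderiv ℝ u x‖ ^ 2) +
          ∫⁻ x in Ω, ENNReal.ofReal (u x ^ 2) ∂V)

/-- `V` is a (positive) Radon measure on `Ω`: finite on compact subsets of `Ω`. -/
def RadonOn {n : ℕ} (V : Measure (Euc n)) (Ω : Set (Euc n)) : Prop :=
  ∀ K : Set (Euc n), K ⊆ Ω → IsCompact K → V K < ⊤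

/-- Absolute continuity of `V` with respect to the Wiener capacity. -/
def AbsContCap {n : ℕ} (V : Measure (Euc n)) (Ω : Set (Euc n)) : Prop :=
  ∀ K : Set (Euc n), K ⊆ Ω → IsCompact K → wienerCap K = 0 → V K = 0

/-- `limsup_{d→0⁺} d⁻² γ(d) = +∞`. -/
def LimsupInftyAtZero (γ : ℝ → ℝ) : Prop :=
  ∀ C : ℝ, ∃ᶠ d in 𝓝[>] (0 : ℝ), C < γ d / d ^ 2

theorem statement_18 {n : ℕ} (hn : 2 ≤ n) (G : Set (Euc n)) (ρ : ℝ)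
    (hG : IsStandardBody G ρ) (d : ℝ) (hd : 0 < d) (y : Euc n)
    (A : ℝ) (hA : 0 < A)
    (hPoincare : ∀ (c : NNReal) (u : Euc n → ℝ),
      LipschitzOnWith c u (closure (bodyAt G d y)) →
      ∫ x in bodyAt G d y,
          (u x - (volume (bodyAt G d y)).toReal⁻¹ * ∫ z in bodyAt G d y, u z) ^ 2 ≤
        A * d ^ 2 * ∫ x in bodyAt G d y, ‖fderiv ℝ u x‖ ^ 2)
    (c : NNReal) (u : Euc n → ℝ) (hu : LipschitzOnWith c u (closure (bodyAt G d y)))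
    (hupos : ∀ x ∈ closure (bodyAt G d y), 0 ≤ u x)
    (hnorm : (volume (bodyAt G d y)).toReal⁻¹ * ∫ x in bodyAt G d y, u x ^ 2 = 1) :
    ∫ x in bodyAt G d y, (1 - u x) ^ 2 ≤
      4 * A * d ^ 2 * ∫ x in bodyAt G d y, ‖fderiv ℝ (fun z => 1 - u z) x‖ ^ 2 := by
  classical
  obtain ⟨hGopen, hGbdd, hGdiam, hρ, hball, hstar⟩ := hG
  set S := bodyAt G d y with hSdef
  -- S is open
  have hSopen : IsOpen S := by
    have h1 : IsOpenMap (fun x : Euc n => d • x) := isOpenMap_smul₀ hd.ne'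
    have h2 : IsOpenMap (fun x : Euc n => y + x) := (Homeomorph.addLeft y).isOpenMap
    have h3 : IsOpenMap (fun x : Euc n => y + d • x) := h2.comp h1
    exact h3 G hGopen
  -- S is bounded
  have hSbdd : Bornology.IsBounded S := by
    have hL : LipschitzWith ‖d‖₊ (fun x : Euc n => y + d • x) :=
      LipschitzWith.of_dist_le_mul fun a b => by
        rw [show y + d • a = y + d • a from rfl, dist_add_left]
        simpa using (lipschitzWith_smul (β := Euc n) d).dist_le_mul a b
    exact hL.isBounded_image hGbdd
  have hclS : IsCompact (closure S) := hSbdd.isCompact_closure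
  -- S nonempty
  have hSne : S.Nonempty :=
    ⟨y + d • 0, ⟨0, hball (Metric.mem_ball_self hρ), rfl⟩⟩
  -- measure facts
  have hfin : volume S < ⊤ := hSbdd.measure_lt_top
  have hpos : 0 < volume S := hSopen.measure_pos volume hSne
  set m := (volume S).toReal with hmdef
  have hm : 0 < m := ENNReal.toReal_pos hpos.ne' hfin.ne
  -- the Poincaré inequality for u (instantiated before further abbreviations)
  have hP := hPoincare c u hu
  set I1 := ∫ x in S, u x with hI1def
  set I2 := ∫ x in S, u x ^ 2 with hI2def
  set D := ∫ x in S, ‖fderiv ℝ u x‖ ^ 2 with hDdef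
  set b := m⁻¹ * I1 with hbdef
  -- integrability
  have hucont : ContinuousOn u (closure S) := hu.continuousOn
  have hintu : IntegrableOn u S := (hucont.integrableOn_compact hclS).mono_set subset_closure
  have hintu2 : IntegrableOn (fun x => u x ^ 2) S := by
    exact ((hucont.pow 2).integrableOn_compact hclS).mono_set subset_closure
  have hintc : IntegrableOn (fun _ : Euc n => (1 : ℝ)) S :=
    integrableOn_const hfin.ne
  have hI2 : I2 = m := by
    have h := hnorm
    field_simp at h
    linarith
  have hI1nonneg : 0 ≤ I1 := by
    rw [hI1def]
    exact setIntegral_nonneg hSopen.measurableSet fun x hx => hupos x (subset_closure hx)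
  -- expand ∫ (1-u)^2
  have hfg1 : IntegrableOn (fun x => u x ^ 2 - 2 * u x) S := by
    exact hintu2.sub (hintu.const_mul 2)
  have expand1 : ∫ x in S, (1 - u x) ^ 2 = m - 2 * I1 + I2 := by
    have hptw : ∀ x : Euc n, (1 - u x) ^ 2 = u x ^ 2 - 2 * u x + 1 := fun x => by ring
    simp only [hptw]
    rw [integral_add hfg1 hintc, integral_sub hintu2 (hintu.const_mul 2), integral_const_mul,
      setIntegral_const]
    simp only [measureReal_def, smul_eq_mul, mul_one, ← hI1def, ← hI2def, ← hmdef]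
    ring
  -- I1 ≤ m from nonnegativity of ∫(1-u)^2
  have hsq : 0 ≤ ∫ x in S, (1 - u x) ^ 2 := integral_nonneg fun x => sq_nonneg _
  have hI1le : I1 ≤ m := by rw [expand1, hI2] at hsq; linarith
  -- expand Poincaré LHS
  have hfg2 : IntegrableOn (fun x => u x ^ 2 - 2 * b * u x) S := by
    exact hintu2.sub (hintu.const_mul (2 * b))
  have expand2 : ∫ x in S, (u x - b) ^ 2 = I2 - 2 * b * I1 + m * b ^ 2 := by
    have hptw : ∀ x : Euc n, (u x - b) ^ 2 = u x ^ 2 - 2 * b * u x + b ^ 2 := fun x => by ring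
    simp only [hptw]
    rw [integral_add hfg2 (integrableOn_const hfin.ne),
      integral_sub hintu2 (hintu.const_mul (2 * b)), integral_const_mul, setIntegral_const]
    simp only [measureReal_def, smul_eq_mul, ← hI1def, ← hI2def, ← hmdef]
    try ring
  rw [expand2] at hP
  have hDnonneg : 0 ≤ D := integral_nonneg fun x => sq_nonneg _
  -- gradient equality
  have hgrad : (∫ x in S, ‖fderiv ℝ (fun z => 1 - u z) x‖ ^ 2) = D := by
    rw [hDdef]
    congr 1
    funext x
    rw [fderiv_const_sub, norm_neg]
  rw [hgrad, expand1, hI2]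
  -- final algebra
  have hb : b * m = I1 := by rw [hbdef]; field_simp
  have hbpos : 0 ≤ b := mul_nonneg (inv_nonneg.mpr hm.le) hI1nonneg
  have hble : b ≤ 1 := by nlinarith
  have hbI : b * I1 = b ^ 2 * m := by rw [← hb]; ring
  have hb2 : b ^ 2 ≤ b := by nlinarith
  have hADD : 0 ≤ A * d ^ 2 * D :=
    mul_nonneg (mul_nonneg hA.le (sq_nonneg d)) hDnonneg
  rw [hI2] at hP
  nlinarith [hP, hb, hbI, hb2, hADD, mul_nonneg (sub_nonneg.mpr hb2) hm.le]
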